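/- Let θ_α ∈ (0,1), β_v, β_l ∈ (0,1), C > 0, f̲ ∈ ℝ, and define φ̃(x,ρ) := ρ(f(x) − f̲) + v(x). Let {x^k} ⊂ ℝⁿ, {d^k} ⊂ ℝⁿ, a nonincreasing sequence {ρ_k} ⊂ (0,∞), {α_k} ⊂ (0,∞), and {ω_k} ⊂ (0,∞) with ω_k → 0 be such that for all k: f(x^k) ≥ f̲; x^{k+1} = x^k + α_k d^k; φ(x^{k+1},ρ_k) − φ(x^k,ρ_k) ≤ −θ_α α_k Δl(d^k,ρ_k;x^k); Δl(d^k,ρ_k;x^k) ≥ 0 and α_k ≥ C·Δl(d^k,ρ_k;x^k); Δl(d^k,ρ_k;x^k) + ω_k ≥ β_l(Δl(d^k,0;x^k) + ω_k); and Δl(d^k,0;x^k) ≥ −(1−β_v)ω_k. Then lim_{k→∞} Δl(d^k,ρ_k;x^k) = 0 and lim_{k→∞} Δl(d^k,0;x^k) = 0. -/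
import Mathlib


open scoped RealInnerProductSpace
open Finset Filter

noncomputable section

/-- `ℝⁿ` with the Euclidean norm. -/
abbrev Evec (n : ℕ) : Type := EuclideanSpace ℝ (Fin n)

variable {n m : ℕ}

/-- Apply a matrix to a Euclidean vector. -/
def matApply (M : Matrix (Fin n) (Fin n) ℝ) (x : Evec n) : Evec n := Matrix.toEuclideanLin M x

/-- Constraint violation measure `v(x) = Σ_{i≤m̄} |cᵢ(x)| + Σ_{i>m̄} max(cᵢ(x),0)`
(indices with `i.val < mbar` are the equality constraints). -/
def vmeas (mbar : ℕ) (c : Fin m → Evec n → ℝ) (x : Evec n) : ℝ :=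
  ∑ i : Fin m, if (i : ℕ) < mbar then |c i x| else max (c i x) 0

/-- Exact penalty function `φ(x,ρ) = ρ f(x) + v(x)`. -/
def phipen (mbar : ℕ) (f : Evec n → ℝ) (c : Fin m → Evec n → ℝ) (x : Evec n) (ρ : ℝ) : ℝ :=
  ρ * f x + vmeas mbar c x

/-- Linearized model
`l(d,ρ;x) = ρ⟨∇f(x),d⟩ + Σ_{i≤m̄} |cᵢ(x)+⟨∇cᵢ(x),d⟩| + Σ_{i>m̄} max(cᵢ(x)+⟨∇cᵢ(x),d⟩,0)`. -/
def lmod (mbar : ℕ) (f : Evec n → ℝ) (c : Fin m → Evec n → ℝ) (x : Evec n) (ρ : ℝ)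
    (d : Evec n) : ℝ :=
  ρ * ⟪gradient f x, d⟫ +
    ∑ i : Fin m, if (i : ℕ) < mbar then |c i x + ⟪gradient (c i) x, d⟫|
      else max (c i x + ⟪gradient (c i) x, d⟫) 0

/-- Model reduction `Δl(d,ρ;x) = l(0,ρ;x) − l(d,ρ;x)`. -/
def Deltal (mbar : ℕ) (f : Evec n → ℝ) (c : Fin m → Evec n → ℝ) (x : Evec n) (ρ : ℝ)
    (d : Evec n) : ℝ :=
  lmod mbar f c x ρ 0 - lmod mbar f c x ρ d

/-- Under the listed conditions on the iterate sequences (monotone penalty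
parameters, sufficient decrease, stepsize lower bound, posterior condition, and lower bound
on the feasibility model reduction, with `ω_k → 0` and `f` bounded below along the iterates),
both model reductions `Δl(d^k,ρ_k;x^k)` and `Δl(d^k,0;x^k)` tend to zero. -/
theorem statement_16
    (n m mbar : ℕ) (hn : 1 ≤ n) (hmm : mbar ≤ m)
    (f : Evec n → ℝ) (c : Fin m → Evec n → ℝ)
    (hf : ContDiff ℝ 1 f) (hc : ∀ i, ContDiff ℝ 1 (c i))
    (θα βv βl C flow : ℝ)
    (hθα : θα ∈ Set.Ioo (0:ℝ) 1) (hβv : βv ∈ Set.Ioo (0:ℝ) 1) (hβl : βl ∈ Set.Ioo (0:ℝ) 1)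
    (hC : 0 < C)
    (x d : ℕ → Evec n) (ρ α ω : ℕ → ℝ)
    (hρpos : ∀ k, 0 < ρ k) (hρmono : ∀ k, ρ (k+1) ≤ ρ k)
    (hαpos : ∀ k, 0 < α k) (hωpos : ∀ k, 0 < ω k)
    (hωlim : Tendsto ω atTop (nhds 0))
    (hflow : ∀ k, flow ≤ f (x k))
    (hstep : ∀ k, x (k+1) = x k + α k • d k)
    (hdec : ∀ k, phipen mbar f c (x (k+1)) (ρ k) - phipen mbar f c (x k) (ρ k)
        ≤ -(θα * α k * Deltal mbar f c (x k) (ρ k) (d k)))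
    (hrednn : ∀ k, 0 ≤ Deltal mbar f c (x k) (ρ k) (d k))
    (hαlb : ∀ k, C * Deltal mbar f c (x k) (ρ k) (d k) ≤ α k)
    (hpost : ∀ k, Deltal mbar f c (x k) (ρ k) (d k) + ω k
        ≥ βl * (Deltal mbar f c (x k) 0 (d k) + ω k))
    (hlb : ∀ k, Deltal mbar f c (x k) 0 (d k) ≥ -((1 - βv) * ω k)) :
    Tendsto (fun k => Deltal mbar f c (x k) (ρ k) (d k)) atTop (nhds 0) ∧
    Tendsto (fun k => Deltal mbar f c (x k) 0 (d k)) atTop (nhds 0) := by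
  obtain ⟨hθ0, hθ1⟩ := hθα
  obtain ⟨hβl0, hβl1⟩ := hβl
  set a : ℕ → ℝ := fun k => Deltal mbar f c (x k) (ρ k) (d k) with ha
  set Φ : ℕ → ℝ := fun k => ρ k * (f (x k) - flow) + vmeas mbar c (x k) with hΦ
  have hvnn : ∀ y : Evec n, 0 ≤ vmeas mbar c y := by
    intro y
    apply Finset.sum_nonneg
    intro i _
    split
    · exact abs_nonneg _
    · exact le_max_right _ _
  have hΦnn : ∀ k, 0 ≤ Φ k := fun k =>
    add_nonneg (mul_nonneg (hρpos k).le (by linarith [hflow k])) (hvnn (x k))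
  have key : ∀ k, θα * C * (a k)^2 ≤ Φ k - Φ (k+1) := by
    intro k
    have h1 : Φ (k+1) ≤ ρ k * (f (x (k+1)) - flow) + vmeas mbar c (x (k+1)) := by
      have : ρ (k+1) * (f (x (k+1)) - flow) ≤ ρ k * (f (x (k+1)) - flow) :=
        mul_le_mul_of_nonneg_right (hρmono k) (by linarith [hflow (k+1)])
      simpa [hΦ] using add_le_add_right this (vmeas mbar c (x (k+1)))
    have h2 := hdec k
    have h3 := hαlb k
    have h4 := hrednn k
    have h5 := hαpos k
    simp only [phipen] at h2
    have hθa : 0 ≤ θα * a k := mul_nonneg hθ0.le h4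
    have : θα * (C * a k) * a k ≤ θα * α k * a k := by
      apply mul_le_mul_of_nonneg_right _ h4
      exact mul_le_mul_of_nonneg_left h3 hθ0.le
    simp only [hΦ] at h1 ⊢
    nlinarith [this, h2, h1]
  have hg_nn : ∀ k, 0 ≤ θα * C * (a k)^2 := by
    intro k; positivity
  have hsum : ∀ N, ∑ k ∈ Finset.range N, θα * C * (a k)^2 ≤ Φ 0 := by
    intro N
    calc ∑ k ∈ Finset.range N, θα * C * (a k)^2
        ≤ ∑ k ∈ Finset.range N, (Φ k - Φ (k+1)) := Finset.sum_le_sum (fun k _ => key k)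
      _ = Φ 0 - Φ N := Finset.sum_range_sub' Φ N
      _ ≤ Φ 0 := by linarith [hΦnn N]
  have hsummable : Summable (fun k => θα * C * (a k)^2) :=
    summable_of_sum_range_le hg_nn hsum
  have hsq : Tendsto (fun k => (a k)^2) atTop (nhds 0) := by
    have h0 := hsummable.tendsto_atTop_zero
    have hpos : (0:ℝ) < θα * C := by positivity
    have h1 := h0.const_mul (θα * C)⁻¹
    simp only [mul_zero] at h1
    exact h1.congr fun k => inv_mul_cancel_left₀ hpos.ne' _
  have haz : Tendsto a atTop (nhds 0) := by
    have h2 := hsq.sqrt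
    rw [Real.sqrt_zero] at h2
    exact h2.congr fun k => Real.sqrt_sq (hrednn k)
  constructor
  · exact haz
  · have hub : ∀ k, Deltal mbar f c (x k) 0 (d k) ≤ (a k + ω k) / βl - ω k := by
      intro k
      have hp := hpost k
      have h1 : Deltal mbar f c (x k) 0 (d k) + ω k ≤ (a k + ω k) / βl := by
        rw [le_div_iff₀ hβl0]
        nlinarith
      linarith
    have hlbz : Tendsto (fun k => -((1 - βv) * ω k)) atTop (nhds 0) := by
      have := (hωlim.const_mul (1 - βv)).neg
      simpa using this
    have hubz : Tendsto (fun k => (a k + ω k) / βl - ω k) atTop (nhds 0) := by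
      have h1 := (haz.add hωlim).div_const βl
      have := h1.sub hωlim
      simpa using this
    exact tendsto_of_tendsto_of_tendsto_of_le_of_le hlbz hubz
      (fun k => hlb k) hub
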